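/- arXiv:2312.00419 — 4 statements merged into one kernel-verified Lean document; each statement's English description precedes it below -/
import Mathlib

section
/- Let m,n ∈ ℕ, η > 0. For u ∈ ℤ₊^m, v ∈ ℤ₊^n with σ(u) ≥ η σ(v), set ξ = (σ(u) − η σ(v))/(m + ηn) and t = (u₁−⌊ξ⌋, …, u_m−⌊ξ⌋, v₁+⌊ξ⌋, …, v_n+⌊ξ⌋). Then (η+1)σ(v) ≤ σ(t) ≤ ((η+1)/η)σ(u), where σ denotes the sum of coordinates. -/
open scoped BigOperators Classical

noncomputable section

/-- `σ(u)`, the sum of the coordinates of a tuple of nonnegative integers, as a real. -/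
def sigmaN {m : ℕ} (u : Fin m → ℕ) : ℝ := ∑ j, (u j : ℝ)

/-- `ξ = (σ(u) - η σ(v)) / (m + η n)`. -/
def xiR (m n : ℕ) (η su sv : ℝ) : ℝ := (su - η * sv) / ((m : ℝ) + η * n)

/-- The tuple `t = (u₁-⌊ξ⌋, …, u_m-⌊ξ⌋, v₁+⌊ξ⌋, …, v_n+⌊ξ⌋)`. -/
def tvec (m n : ℕ) (η : ℝ) (u : Fin m → ℕ) (v : Fin n → ℕ) : Fin m ⊕ Fin n → ℤ :=
  Sum.elim (fun j => (u j : ℤ) - ⌊xiR m n η (sigmaN u) (sigmaN v)⌋)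
           (fun i => (v i : ℤ) + ⌊xiR m n η (sigmaN u) (sigmaN v)⌋)

/-- `σ(t)`, the sum of the coordinates of an integer tuple, as a real. -/
def sigmaZ {m n : ℕ} (t : Fin m ⊕ Fin n → ℤ) : ℝ := ∑ k, (t k : ℝ)

/-- The index set `T ⊆ ℤ^{m+n}` of the transference construction. -/
def Tset (m n : ℕ) (η : ℝ) : Set (Fin m ⊕ Fin n → ℤ) :=
  {t | ∃ (u : Fin m → ℕ) (v : Fin n → ℕ), η * sigmaN v ≤ sigmaN u ∧ t = tvec m n η u v}

/-- `(η+1) σ(v) ≤ σ(t) ≤ ((η+1)/η) σ(u)` for the transference tuple `t`. -/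
theorem sigmaT_bounds (m n : ℕ) (hm : 0 < m) (hn : 0 < n) (η : ℝ) (hη : 0 < η)
    (u : Fin m → ℕ) (v : Fin n → ℕ) (h : η * sigmaN v ≤ sigmaN u) :
    (η + 1) * sigmaN v ≤ sigmaZ (tvec m n η u v) ∧
      sigmaZ (tvec m n η u v) ≤ ((η + 1) / η) * sigmaN u := by
  have hden : (0:ℝ) < (m:ℝ) + η * n := by positivity
  set ξ := xiR m n η (sigmaN u) (sigmaN v) with hξdef
  have hξ0 : 0 ≤ ξ := div_nonneg (by linarith) hden.le
  set f : ℤ := ⌊ξ⌋ with hf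
  have hf0 : (0:ℝ) ≤ (f:ℝ) := by exact_mod_cast Int.floor_nonneg.mpr hξ0
  have hfle : (f:ℝ) ≤ ξ := Int.floor_le ξ
  have hsv0 : 0 ≤ sigmaN v := Finset.sum_nonneg fun i _ => by positivity
  have hkey : ((m:ℝ) + η * n) * ξ = sigmaN u - η * sigmaN v := by
    rw [hξdef, xiR]; field_simp
  have hsum : sigmaZ (tvec m n η u v)
      = sigmaN u + sigmaN v + ((n:ℝ) - (m:ℝ)) * (f:ℝ) := by
    simp only [sigmaZ, tvec, Fintype.sum_sum_type, Sum.elim_inl, Sum.elim_inr, ← hξdef, ← hf]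
    push_cast
    rw [Finset.sum_sub_distrib, Finset.sum_add_distrib, Finset.sum_const, Finset.sum_const]
    simp only [sigmaN, Finset.card_univ, Fintype.card_fin, nsmul_eq_mul]
    ring
  constructor
  · rw [hsum]
    nlinarith [mul_nonneg (Nat.cast_nonneg m : (0:ℝ) ≤ m) (sub_nonneg.mpr hfle),
      mul_nonneg (mul_nonneg hη.le (Nat.cast_nonneg n : (0:ℝ) ≤ n)) hξ0,
      mul_nonneg (Nat.cast_nonneg n : (0:ℝ) ≤ n) hf0]
  · rw [hsum, div_mul_eq_mul_div, le_div_iff₀ hη]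
    nlinarith [mul_nonneg (mul_nonneg hη.le (Nat.cast_nonneg n : (0:ℝ) ≤ n)) (sub_nonneg.mpr hfle),
      mul_nonneg (Nat.cast_nonneg m : (0:ℝ) ≤ m) hξ0,
      mul_nonneg (mul_nonneg hη.le (Nat.cast_nonneg m : (0:ℝ) ≤ m)) hf0]
end
end

section
/- Let m,n ∈ ℕ, η > 0, ε > 0. Suppose u ∈ ℤ₊^m, v ∈ ℤ₊^n satisfy σ(u) − η σ(v) > ε σ(v) ≥ 0, and let ξ = (σ(u) − η σ(v))/(m + ηn) and t = (u₁−⌊ξ⌋, …, u_m−⌊ξ⌋, v₁+⌊ξ⌋, …, v_n+⌊ξ⌋). Then ξ > τ₀ σ(t), where τ₀ = min(ε, η) / (2(η+1)(m+ηn)). -/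
open scoped BigOperators Classical

noncomputable section

set_option maxHeartbeats 1000000 in
/-- If `σ(u) - η σ(v) > ε σ(v)`, then `ξ > τ₀ σ(t)` with
`τ₀ = min(ε,η) / (2(η+1)(m+ηn))`. -/
theorem xi_gt_tau0_sigmaT (m n : ℕ) (hm : 0 < m) (hn : 0 < n) (η : ℝ) (hη : 0 < η)
    (ε : ℝ) (hε : 0 < ε) (u : Fin m → ℕ) (v : Fin n → ℕ)
    (h : ε * sigmaN v < sigmaN u - η * sigmaN v) :
    (min ε η / (2 * (η + 1) * ((m : ℝ) + η * n))) * sigmaZ (tvec m n η u v) <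
      xiR m n η (sigmaN u) (sigmaN v) := by
  have hst0 : sigmaZ (tvec m n η u v) =
      (sigmaN u - m * (⌊xiR m n η (sigmaN u) (sigmaN v)⌋ : ℝ)) +
      (sigmaN v + n * (⌊xiR m n η (sigmaN u) (sigmaN v)⌋ : ℝ)) := by
    simp only [sigmaZ, tvec, Fintype.sum_sum_type, Sum.elim_inl, Sum.elim_inr,
      Int.cast_sub, Int.cast_add, Int.cast_natCast, Finset.sum_sub_distrib,
      Finset.sum_add_distrib, Finset.sum_const, Finset.card_univ, Fintype.card_fin,
      nsmul_eq_mul, sigmaN]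
  have hsu0 : 0 ≤ sigmaN u := Finset.sum_nonneg fun j _ => Nat.cast_nonneg _
  have hsv0 : 0 ≤ sigmaN v := Finset.sum_nonneg fun j _ => Nat.cast_nonneg _
  set su := sigmaN u with hsu
  set sv := sigmaN v with hsv
  have hD : 0 < (m : ℝ) + η * n := by positivity
  have hP : 0 < su - η * sv := lt_of_le_of_lt (by positivity) h
  set ξ := xiR m n η su sv with hξdef
  have hξpos : 0 < ξ := div_pos hP hD
  have hDξ : ((m : ℝ) + η * n) * ξ = su - η * sv := by
    rw [hξdef, xiR]; field_simp
  have hfl0 : 0 ≤ (⌊ξ⌋ : ℝ) := by exact_mod_cast Int.floor_nonneg.2 hξpos.le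
  have hfle : (⌊ξ⌋ : ℝ) ≤ ξ := Int.floor_le ξ
  set S := sigmaZ (tvec m n η u v) with hSdef
  clear_value S ξ sv su
  have hst : S = (su - m * ⌊ξ⌋) + (sv + n * ⌊ξ⌋) := hst0
  clear hst0
  have hmn : (0:ℝ) < m := by exact_mod_cast hm
  have hnn : (0:ℝ) < n := by exact_mod_cast hn
  have hmξ : (m : ℝ) * ξ ≤ su := by nlinarith [mul_pos (mul_pos hη hnn) hξpos]
  have hnξ : η * ((n : ℝ) * ξ) ≤ su - η * sv := by nlinarith [mul_pos hmn hξpos]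
  have hS0 : 0 ≤ S := by nlinarith [mul_nonneg hnn.le hfl0, mul_le_mul_of_nonneg_left hfle hmn.le]
  have hSup : η * S ≤ (η + 1) * su := by
    nlinarith [mul_nonneg (mul_nonneg hη.le hmn.le) hfl0,
      mul_le_mul_of_nonneg_left (mul_le_mul_of_nonneg_left hfle hnn.le) hη.le]
  have hmin1 : min ε η ≤ ε := min_le_left _ _
  have hmin2 : min ε η ≤ η := min_le_right _ _
  have hmin0 : 0 < min ε η := lt_min hε hη
  have key : min ε η * S < 2 * (η + 1) * (su - η * sv) := by
    by_cases hcase : su ≤ 2 * η * sv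
    · have hsvpos : 0 < sv := by nlinarith
      have hSb : S ≤ 2 * (η + 1) * sv := by nlinarith
      calc min ε η * S ≤ ε * (2 * (η + 1) * sv) := by nlinarith
        _ = 2 * (η + 1) * (ε * sv) := by ring
        _ < 2 * (η + 1) * (su - η * sv) := by nlinarith
    · push_neg at hcase
      have : min ε η * S ≤ (η + 1) * su := by nlinarith
      nlinarith
  rw [div_mul_eq_mul_div, div_lt_iff₀ (by positivity)]
  nlinarith [key, hDξ]
end
end

section
/- Let m,n ∈ ℕ, η > 0, and define T ⊂ ℤ^{m+n} to be the set of tuples t = (u₁−⌊ξ⌋,…,u_m−⌊ξ⌋, v₁+⌊ξ⌋,…,v_n+⌊ξ⌋) over all u ∈ ℤ₊^m, v ∈ ℤ₊^n with σ(u) ≥ η σ(v), where ξ = (σ(u)−ησ(v))/(m+ηn). Then for every τ > 0, the series Σ_{t ∈ T} e^{−τσ(t)} converges. -/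
/-!
Every `t ∈ T` comes from some `(u, v)`, and since `⌊ξ⌋` differs from `ξ` by less than one,
`σ(t) ≥ ((η + 1)/(m + ηn)) (n σ(u) + m σ(v)) - (m + n)`. Hence `e^{-τσ(t)}` is dominated by a
constant times `e^{-c n σ(u)} e^{-c m σ(v)}` with `c > 0`, a product of two convergent
multi-geometric series over `ℕ^m` and `ℕ^n`.
-/

open scoped BigOperators Classical

noncomputable section

theorem Summable.subtype_of_subset_range {α β γ : Type*} [AddCommGroup γ] [UniformSpace γ]
    [IsUniformAddGroup γ] [CompleteSpace γ] {f : β → γ} {g : α → β} (hf : Summable (f ∘ g))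
    {s : Set β} (hs : s ⊆ Set.range g) : Summable fun x : s => f x := by
  have hrange : Summable fun y : Set.range g => f y := by
    simpa only [Function.comp_def, Set.apply_rangeSplitting] using
      hf.comp_injective (Set.rangeSplitting_injective g)
  exact hrange.comp_injective (Set.inclusion_injective hs)

theorem summable_prod_fin_of_nonneg {α : Type*} {f : α → ℝ} (hf₀ : 0 ≤ f) (hf : Summable f) :
    ∀ m : ℕ, Summable fun x : Fin m → α => ∏ i, f (x i)
  | 0 => Summable.of_finite
  | m + 1 => by
    have hprod := hf.mul_of_nonneg (summable_prod_fin_of_nonneg hf₀ hf m) hf₀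
      fun _ => Finset.prod_nonneg fun i _ => hf₀ _
    rw [← (Fin.consEquiv fun _ => α).summable_iff]
    simpa only [Function.comp_def, Fin.consEquiv_apply, Fin.prod_univ_succ, Fin.cons_zero,
      Fin.cons_succ] using hprod

theorem summable_exp_mul_sigmaN {a : ℝ} (ha : a < 0) (m : ℕ) :
    Summable fun u : Fin m → ℕ => Real.exp (a * sigmaN u) := by
  have h := summable_prod_fin_of_nonneg (fun k => (Real.exp_pos _).le)
    (Real.summable_exp_nat_mul_iff.mpr ha) m
  refine h.congr fun u => ?_
  rw [sigmaN, Finset.mul_sum, Real.exp_sum]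
  simp only [mul_comm a]

theorem sigmaZ_tvec (m n : ℕ) (η : ℝ) (u : Fin m → ℕ) (v : Fin n → ℕ) :
    sigmaZ (tvec m n η u v) =
      sigmaN u + sigmaN v + ((n : ℝ) - m) * ⌊xiR m n η (sigmaN u) (sigmaN v)⌋ := by
  simp only [sigmaZ, tvec, Fintype.sum_sum_type, Sum.elim_inl, Sum.elim_inr]
  push_cast
  simp only [Finset.sum_sub_distrib, Finset.sum_add_distrib, sigmaN, Finset.sum_const,
    Finset.card_univ, Fintype.card_fin, nsmul_eq_mul]
  ring

theorem sigmaZ_tvec_ge {m n : ℕ} {η : ℝ} (hD : 0 < (m : ℝ) + η * n)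
    (u : Fin m → ℕ) (v : Fin n → ℕ) :
    (η + 1) / ((m : ℝ) + η * n) * (n * sigmaN u + m * sigmaN v) - (m + n) ≤
      sigmaZ (tvec m n η u v) := by
  set ξ := xiR m n η (sigmaN u) (sigmaN v)
  have hξ : (η + 1) / ((m : ℝ) + η * n) * (n * sigmaN u + m * sigmaN v) =
      sigmaN u + sigmaN v + ((n : ℝ) - m) * ξ := by
    simp only [ξ, xiR]
    field_simp
    ring
  rw [hξ, sigmaZ_tvec]
  have hm : (0 : ℝ) ≤ m := m.cast_nonneg
  have hn : (0 : ℝ) ≤ n := n.cast_nonneg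
  -- the error `(n - m)(ξ - ⌊ξ⌋)` is at most `n` because `0 ≤ ξ - ⌊ξ⌋ < 1`
  nlinarith [Int.floor_le ξ, Int.lt_floor_add_one ξ]

theorem summable_exp_neg_mul_sigmaZ_tvec {m n : ℕ} (hm : 0 < m) (hn : 0 < n) {η : ℝ}
    (hη : 0 < η) {τ : ℝ} (hτ : 0 < τ) :
    Summable fun p : (Fin m → ℕ) × (Fin n → ℕ) =>
      Real.exp (-τ * sigmaZ (tvec m n η p.1 p.2)) := by
  have hD : 0 < (m : ℝ) + η * n := by positivity
  set c := τ * ((η + 1) / ((m : ℝ) + η * n))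
  have hmajor : Summable fun p : (Fin m → ℕ) × (Fin n → ℕ) => Real.exp (τ * (m + n)) *
      (Real.exp (-(c * n) * sigmaN p.1) * Real.exp (-(c * m) * sigmaN p.2)) := by
    refine Summable.mul_left _ <| Summable.mul_of_nonneg
      (summable_exp_mul_sigmaN (by simp only [neg_lt_zero]; positivity) m)
      (summable_exp_mul_sigmaN (by simp only [neg_lt_zero]; positivity) n)
      (fun _ => (Real.exp_pos _).le) (fun _ => (Real.exp_pos _).le)
  refine hmajor.of_nonneg_of_le (fun _ => (Real.exp_pos _).le) fun p => ?_
  rw [← Real.exp_add, ← Real.exp_add, Real.exp_le_exp]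
  nlinarith [mul_le_mul_of_nonneg_left (sigmaZ_tvec_ge hD p.1 p.2) hτ.le]

theorem Tset_subset_range (m n : ℕ) (η : ℝ) :
    Tset m n η ⊆ Set.range fun p : (Fin m → ℕ) × (Fin n → ℕ) => tvec m n η p.1 p.2 := by
  rintro _ ⟨u, v, -, rfl⟩
  exact ⟨(u, v), rfl⟩

/-- The series `Σ_{t ∈ T} e^{-τ σ(t)}` converges for every `τ > 0`. -/
theorem summable_exp_neg_sigmaT (m n : ℕ) (hm : 0 < m) (hn : 0 < n) (η : ℝ) (hη : 0 < η)
    (τ : ℝ) (hτ : 0 < τ) :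
    Summable (fun t : Tset m n η => Real.exp (-τ * sigmaZ t.val)) :=
  (summable_exp_neg_mul_sigmaZ_tvec hm hn hη hτ).subtype_of_subset_range
    (f := fun t => Real.exp (-τ * sigmaZ t)) (Tset_subset_range m n η)
end
end

section
/- (Inhomogeneous transference principle, abstract form.) Let X be a locally compact metric space, A and T countable index sets, H and I maps assigning open subsets H_t(α,λ), I_t(α,λ) of X, and Φ a set of functions φ: T → ℝ₊. Let μ be a finite, doubling, non-atomic measure supported on a bounded set S ⊂ X. Suppose (H,I,Φ) satisfies the intersection property (for each φ ∈ Φ there is φ* ∈ Φ with I_t(α,φ(t)) ∩ I_t(α',φ(t)) ⊆ H_t(φ*(t)) for all distinct α, α' and all but finitely many t), and μ is contracting with respect to (I,Φ) (for each φ there exist φ⁺ ∈ Φ and summable (k_t) with covers C_{t,α} of S ∩ I_t(α,φ(t)) by balls B centred in S with S ∩ ∪B ⊆ I_t(α,φ⁺(t)) and μ(5B ∩ I_t(α,φ(t))) ≤ k_t μ(5B)). Then: if μ(limsup_t H_t(φ(t))) = 0 for all φ ∈ Φ, then μ(limsup_t I_t(φ(t))) = 0 for all φ ∈ Φ. -/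
/-!
Fix `φ ∈ Φ`, take `φ⁺` from the contraction property of `φ` and `ψ` from the intersection
property of `φ⁺`, and put `G_t = ⋃_β H_t(β, ψ(t))`, whose limsup set is null. Let `D(G)` be the
set of points of `S` at which `G` fills a `1/(2c²)` proportion of some ball. A point of
`S ∩ I_t(φ(t))` outside `G_t ∪ D(G_t)` lies in a ball `B` of the contracting cover that `G_t`
fills to less than one half. A Vitali subfamily of these balls, with the contraction and
doubling inequalities on the `5`-fold enlargements, bounds the measure of such points by
`2c³ k_t μ(X)`, because the sets `B \ G_t` of different indices `α` meet only off `S` by the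
intersection property; Borel–Cantelli disposes of them. Finally `D` obeys the weak-type bound
`μ(D(G)) ≤ 2c⁵ μ(G)` of a maximal function, and `D(G_t) ⊆ D(⋃_{s ∉ F} G_s)` for `t ∉ F`, where
the tail unions have measure tending to `μ(limsup G_t) = 0`.
-/

open MeasureTheory Metric Set Filter Function Topology
open scoped ENNReal

theorem Metric.ball_subset_ball_five_mul {X : Type*} [PseudoMetricSpace X] {x y : X} {r ρ : ℝ}
    (h : (ball x r ∩ ball y ρ).Nonempty) (hr : r ≤ 2 * ρ) : ball x r ⊆ ball y (5 * ρ) := by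
  obtain ⟨z, hzx, hzy⟩ := h
  intro w hw
  rw [mem_ball] at hzx hzy hw ⊢
  linarith [dist_triangle4 w x z y, dist_comm x z]

theorem Set.inter_iUnion_diff_subset_of_subset {X A : Type*} {S G : Set X} {I J : A → Set X}
    (hJ : ∀ α α', α ≠ α' → J α ∩ J α' ⊆ G)
    (hIJ : ∀ α, S ∩ I α ⊆ J α) {α₀ : A} (hSJ : S ⊆ J α₀) : (S ∩ ⋃ α, I α) \ G ⊆ I α₀ := by
  rintro x ⟨⟨hxS, hxI⟩, hxG⟩
  obtain ⟨α, hxα⟩ := mem_iUnion.1 hxI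
  obtain rfl : α = α₀ := by
    by_contra hne
    exact hxG (hJ α α₀ hne ⟨hIJ α ⟨hxS, hxα⟩, hSJ hxS⟩)
  exact hxα

section Limsup

variable {α T : Type*} [MeasurableSpace α] {μ : Measure α} {E : T → Set α}

theorem measure_setOf_infinite_eq_zero_of_subset_union {P Q : T → Set α}
    (hE : ∀ t, E t ⊆ P t ∪ Q t) (hP : μ {x | {t | x ∈ P t}.Infinite} = 0)
    (hQ : μ {x | {t | x ∈ Q t}.Infinite} = 0) : μ {x | {t | x ∈ E t}.Infinite} = 0 := by
  refine measure_mono_null (fun x hx => ?_) (measure_union_null hP hQ)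
  exact infinite_union.1 (hx.mono fun t ht => hE t ht)

theorem measure_setOf_infinite_eq_zero_of_eventually_le [Countable T] [IsFiniteMeasure μ]
    {a : T → ℝ≥0∞} (ha : ∑' t, a t ≠ ∞) (h : ∀ᶠ t in cofinite, μ (E t) ≤ a t) :
    μ {x | {t | x ∈ E t}.Infinite} = 0 := by
  classical
  set E' := fun t => if μ (E t) ≤ a t then E t else ∅
  have hE' : μ {x | {t | x ∈ E' t}.Infinite} = 0 := by
    rw [← cofinite.limsup_set_eq]
    refine measure_limsup_cofinite_eq_zero (ne_top_of_le_ne_top ha (ENNReal.tsum_le_tsum ?_))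
    intro t
    by_cases ht : μ (E t) ≤ a t <;> simp [E', ht]
  refine measure_mono_null (fun x hx => ?_) hE'
  refine (hx.sdiff (eventually_cofinite.1 h)).mono ?_
  rintro t ⟨hxt, ht⟩
  simp_all [E']

theorem measure_setOf_infinite_mem_map_eq_zero [Countable T] [IsFiniteMeasure μ]
    {D : Set α → Set α} (hD : Monotone D) {M : ℝ≥0∞} (hM : M ≠ ∞)
    (hDμ : ∀ G, MeasurableSet G → μ (D G) ≤ M * μ G) (hE : ∀ t, MeasurableSet (E t))
    (h : μ {x | {t | x ∈ E t}.Infinite} = 0) : μ {x | {t | x ∈ D (E t)}.Infinite} = 0 := by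
  set tail : Finset T → Set α := fun F => ⋃ t ∉ F, E t
  have htail_anti : Antitone tail := fun F F' hFF' =>
    biUnion_mono (fun t ht h => ht (hFF' h)) fun _ _ => subset_rfl
  have htail_inter : ⋂ F, tail F ⊆ {x | {t | x ∈ E t}.Infinite} := fun x hx hfin => by
    obtain ⟨t, ht, hxt⟩ := mem_iUnion₂.1 (mem_iInter.1 hx hfin.toFinset)
    exact ht (hfin.mem_toFinset.2 hxt)
  have htail_meas : ∀ F, MeasurableSet (tail F) := fun F => .iUnion fun t => .iUnion fun _ => hE t
  have hlim : Tendsto (fun F => M * μ (tail F)) atTop (𝓝 0) := by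
    have := tendsto_measure_iInter_atTop (μ := μ) (s := tail)
      (fun F => (htail_meas F).nullMeasurableSet) htail_anti ⟨∅, measure_ne_top μ _⟩
    rw [measure_mono_null htail_inter h] at this
    simpa using ENNReal.Tendsto.const_mul this (Or.inr hM)
  refine nonpos_iff_eq_zero.1 (ge_of_tendsto' hlim fun F => ?_)
  refine (measure_mono fun x hx => ?_).trans (hDμ _ (htail_meas F))
  obtain ⟨t, hxt, htF⟩ := hx.exists_notMem_finset F
  exact hD (subset_biUnion_of_mem (u := E) htF) hxt

theorem measure_le_two_mul_measure_diff_of_not_le {s t : Set α} (h : ¬μ s ≤ 2 * μ (s ∩ t)) :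
    μ s ≤ 2 * μ (s \ t) := by
  refine le_of_not_gt fun h' => lt_irrefl (2 * μ s) ?_
  calc 2 * μ s ≤ 2 * (μ (s ∩ t) + μ (s \ t)) := by gcongr; exact measure_le_inter_add_sdiff μ s t
    _ = 2 * μ (s ∩ t) + 2 * μ (s \ t) := mul_add _ _ _
    _ < μ s + μ s := ENNReal.add_lt_add (not_le.1 h) h'
    _ = 2 * μ s := (two_mul _).symm

end Limsup

section Doubling

variable {X : Type*} [MetricSpace X] [MeasurableSpace X] {μ : Measure X} {S G : Set X}
  {c : ℝ≥0∞}

def DoublingOn (μ : Measure X) (S : Set X) (c : ℝ≥0∞) : Prop :=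
  ∀ x ∈ S, ∀ r : ℝ, 0 < r → μ (ball x (2 * r)) ≤ c * μ (ball x r)

namespace DoublingOn

variable {x : X} {r : ℝ}

theorem measure_ball_two_pow_mul_le (hd : DoublingOn μ S c) (hx : x ∈ S) (hr : 0 < r) (n : ℕ) :
    μ (ball x (2 ^ n * r)) ≤ c ^ n * μ (ball x r) := by
  induction n with
  | zero => simp
  | succ n ih =>
    calc μ (ball x (2 ^ (n + 1) * r)) = μ (ball x (2 * (2 ^ n * r))) := by ring_nf
      _ ≤ c * μ (ball x (2 ^ n * r)) := hd x hx _ (by positivity)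
      _ ≤ c * (c ^ n * μ (ball x r)) := by gcongr
      _ = c ^ (n + 1) * μ (ball x r) := by ring

theorem measure_ball_le_pow_mul (hd : DoublingOn μ S c) (hx : x ∈ S) (hr : 0 < r) {n : ℕ}
    {R : ℝ} (hR : R ≤ 2 ^ n * r) : μ (ball x R) ≤ c ^ n * μ (ball x r) :=
  (measure_mono (ball_subset_ball hR)).trans (hd.measure_ball_two_pow_mul_le hx hr n)

theorem measure_ball_pos (hd : DoublingOn μ S c) (hμ : μ ≠ 0) (hx : x ∈ S) (hr : 0 < r) :
    0 < μ (ball x r) := by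
  refine pos_iff_ne_zero.2 fun h0 => hμ (Measure.measure_univ_eq_zero.1 ?_)
  have hcover : ⋃ n : ℕ, ball x (2 ^ n * r) = univ := by
    refine eq_univ_of_forall fun y => mem_iUnion.2 ?_
    obtain ⟨n, hn⟩ := pow_unbounded_of_one_lt (dist y x / r) one_lt_two
    exact ⟨n, mem_ball.2 ((div_lt_iff₀ hr).1 hn)⟩
  rw [← hcover]
  exact measure_iUnion_null fun n =>
    nonpos_iff_eq_zero.1 ((hd.measure_ball_two_pow_mul_le hx hr n).trans (by simp [h0]))

end DoublingOn

theorem exists_countable_disjoint_subfamily_five_mul_cover [OpensMeasurableSpace X] [SFinite μ]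
    {ι : Type*} (s : Set ι) (x : ι → X) (r : ι → ℝ) (hr : ∀ i ∈ s, 0 < r i) {R : ℝ}
    (hR : ∀ i ∈ s, r i ≤ R) (hpos : ∀ i ∈ s, 0 < μ (ball (x i) (r i))) :
    ∃ u ⊆ s, u.Countable ∧ u.PairwiseDisjoint (fun i => ball (x i) (r i)) ∧
      ⋃ i ∈ s, ball (x i) (r i) ⊆ ⋃ i ∈ u, ball (x i) (5 * r i) := by
  obtain ⟨u, hus, hdisj, hcov⟩ := Vitali.exists_disjoint_subfamily_covering_enlargement
    (fun i => ball (x i) (r i)) s r 2 one_lt_two (fun i hi => (hr i hi).le) R hR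
    (fun i hi => nonempty_ball.2 (hr i hi))
  refine ⟨u, hus, ?_, hdisj, iUnion₂_subset fun i hi => ?_⟩
  · have hcount := Measure.countable_meas_pos_of_disjoint_iUnion (μ := μ)
      (As := fun i : u => ball (x i) (r i)) (fun _ => measurableSet_ball)
      (fun i j hij => hdisj i.2 j.2 (Subtype.coe_injective.ne hij))
    rw [show {i : u | 0 < μ (ball (x i) (r i))} = univ from
      eq_univ_of_forall fun i => hpos i (hus i.2), countable_univ_iff] at hcount
    exact countable_coe_iff.1 hcount
  · obtain ⟨j, hju, hne, hle⟩ := hcov i hi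
    exact (ball_subset_ball_five_mul hne hle).trans
      (subset_biUnion_of_mem (u := fun i => ball (x i) (5 * r i)) hju)

/-- The points of `S` where the maximal function of `1_G` over radii `≤ R` is at least `K⁻¹`. -/
def highDensitySet (μ : Measure X) (S : Set X) (R : ℝ) (K : ℝ≥0∞) (G : Set X) : Set X :=
  {x ∈ S | ∃ ρ, 0 < ρ ∧ ρ ≤ R ∧ μ (ball x ρ) ≤ K * μ (ball x ρ ∩ G)}

theorem highDensitySet_mono {R : ℝ} {K : ℝ≥0∞} : Monotone (highDensitySet μ S R K) :=
  fun _ _ hGG' _ ⟨hxS, ρ, hρ, hρR, hK⟩ =>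
    ⟨hxS, ρ, hρ, hρR, hK.trans (by gcongr)⟩

theorem DoublingOn.measure_highDensitySet_le [OpensMeasurableSpace X] [SFinite μ]
    (hd : DoublingOn μ S c) (hμ : μ ≠ 0) (hG : MeasurableSet G) (R : ℝ) (K : ℝ≥0∞) :
    μ (highDensitySet μ S R K G) ≤ c ^ 3 * K * μ G := by
  set E := highDensitySet μ S R K G
  have hradius : ∀ x, ∃ ρ, x ∈ E → 0 < ρ ∧ ρ ≤ R ∧ μ (ball x ρ) ≤ K * μ (ball x ρ ∩ G) :=
    fun x => (em (x ∈ E)).elim (fun hx => hx.2.imp fun _ h _ => h) fun hx => ⟨0, (absurd · hx)⟩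
  choose ρ hρ using hradius
  obtain ⟨u, huE, hu, hdisj, hcov⟩ := exists_countable_disjoint_subfamily_five_mul_cover E id ρ
    (fun x hx => (hρ x hx).1) (fun x hx => (hρ x hx).2.1)
    (fun x hx => hd.measure_ball_pos hμ hx.1 (hρ x hx).1)
  have hEcov : E ⊆ ⋃ x ∈ E, ball x (ρ x) := fun x hx => mem_biUnion hx (mem_ball_self (hρ x hx).1)
  calc μ E ≤ ∑' x : u, μ (ball x (5 * ρ x)) :=
        (measure_mono (hEcov.trans hcov)).trans (measure_biUnion_le μ hu _)
    _ ≤ ∑' x : u, c ^ 3 * K * μ (ball x (ρ x) ∩ G) := by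
        refine ENNReal.tsum_le_tsum fun x => ?_
        have hxE := huE x.2
        calc μ (ball (x : X) (5 * ρ x)) ≤ c ^ 3 * μ (ball (x : X) (ρ x)) :=
              hd.measure_ball_le_pow_mul hxE.1 (hρ x hxE).1 (by linarith [(hρ x hxE).1])
          _ ≤ c ^ 3 * (K * μ (ball (x : X) (ρ x) ∩ G)) := by gcongr; exact (hρ x hxE).2.2
          _ = c ^ 3 * K * μ (ball (x : X) (ρ x) ∩ G) := by ring
    _ = c ^ 3 * K * ∑' x : u, μ (ball x (ρ x) ∩ G) := ENNReal.tsum_mul_left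
    _ ≤ c ^ 3 * K * μ G := by
        gcongr
        refine (tsum_meas_le_meas_iUnion_of_disjoint μ (fun _ => measurableSet_ball.inter hG)
          fun x y hxy => ?_).trans (measure_mono (iUnion_subset fun _ => inter_subset_right))
        exact (hdisj x.2 y.2 (Subtype.coe_injective.ne hxy)).mono inter_subset_left
          inter_subset_left

theorem DoublingOn.mem_highDensitySet_of_mem_ball (hd : DoublingOn μ S c) {x y : X} {r R : ℝ}
    {K : ℝ≥0∞} (hx : x ∈ S) (hy : y ∈ S) (hxy : x ∈ ball y r) (hrR : r ≤ R)
    (hK : μ (ball y r) ≤ K * μ (ball y r ∩ G)) :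
    x ∈ highDensitySet μ S (2 * R) (c ^ 2 * K) G := by
  have hr : 0 < r := pos_of_mem_ball hxy
  have hyx : ball y r ⊆ ball x (2 * r) :=
    ball_subset_ball' (by linarith [mem_ball'.1 hxy])
  refine ⟨hx, 2 * r, by positivity, by linarith, ?_⟩
  calc μ (ball x (2 * r)) ≤ μ (ball y (4 * r)) :=
        measure_mono (ball_subset_ball' (by linarith [mem_ball.1 hxy]))
    _ ≤ c ^ 2 * μ (ball y r) := hd.measure_ball_le_pow_mul hy hr (by norm_num)
    _ ≤ c ^ 2 * (K * μ (ball y r ∩ G)) := by gcongr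
    _ ≤ c ^ 2 * K * μ (ball x (2 * r) ∩ G) := by
        rw [← mul_assoc]; gcongr

theorem DoublingOn.exists_countable_disjoint_subfamily_measure_diff_highDensitySet_le
    [OpensMeasurableSpace X] [SFinite μ] (hd : DoublingOn μ S c) (hμ : μ ≠ 0) {I : Set X}
    {C : Set (X × ℝ)} {R : ℝ} {k : ℝ≥0∞} (hC : ∀ b ∈ C, b.1 ∈ S ∧ 0 < b.2) (hCR : ∀ b ∈ C, b.2 ≤ R)
    (hcov : S ∩ I ⊆ ⋃ b ∈ C, ball b.1 b.2)
    (hk : ∀ b ∈ C, μ (ball b.1 (5 * b.2) ∩ I) ≤ k * μ (ball b.1 (5 * b.2))) :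
    ∃ u ⊆ C, u.Countable ∧ u.PairwiseDisjoint (fun b => ball b.1 b.2) ∧
      μ ((S ∩ I) \ highDensitySet μ S (2 * R) (c ^ 2 * 2) G) ≤
        2 * c ^ 3 * k * ∑' b : u, μ (ball b.1.1 b.1.2 \ G) := by
  set L := {b ∈ C | ¬μ (ball b.1 b.2) ≤ 2 * μ (ball b.1 b.2 ∩ G)}
  -- `L` consists of the balls less than half filled by `G`; a point of `S ∩ I` in another ball of
  -- `C` is a point of high density of `G`
  have hcovL : (S ∩ I) \ highDensitySet μ S (2 * R) (c ^ 2 * 2) G ⊆ ⋃ b ∈ L, ball b.1 b.2 := by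
    rintro x ⟨hxSI, hxD⟩
    obtain ⟨b, hbC, hxb⟩ := mem_iUnion₂.1 (hcov hxSI)
    refine mem_biUnion ⟨hbC, fun hheavy => hxD ?_⟩ hxb
    exact hd.mem_highDensitySet_of_mem_ball hxSI.1 (hC b hbC).1 hxb (hCR b hbC) hheavy
  obtain ⟨u, huL, hu, hdisj, hcovu⟩ := exists_countable_disjoint_subfamily_five_mul_cover
    (μ := μ) L Prod.fst Prod.snd (fun b hb => (hC b hb.1).2) (fun b hb => hCR b hb.1)
    (fun b hb => hd.measure_ball_pos hμ (hC b hb.1).1 (hC b hb.1).2)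
  refine ⟨u, huL.trans (sep_subset _ _), hu, hdisj, ?_⟩
  have hsub : (S ∩ I) \ highDensitySet μ S (2 * R) (c ^ 2 * 2) G ⊆
      ⋃ b ∈ u, ball b.1 (5 * b.2) ∩ I := fun x hx => by
    obtain ⟨b, hbu, hxb⟩ := mem_iUnion₂.1 (hcovu (hcovL hx))
    exact mem_biUnion hbu ⟨hxb, hx.1.2⟩
  calc μ ((S ∩ I) \ highDensitySet μ S (2 * R) (c ^ 2 * 2) G)
      ≤ ∑' b : u, μ (ball b.1.1 (5 * b.1.2) ∩ I) :=
        (measure_mono hsub).trans (measure_biUnion_le μ hu _)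
    _ ≤ ∑' b : u, 2 * c ^ 3 * k * μ (ball b.1.1 b.1.2 \ G) := by
        refine ENNReal.tsum_le_tsum fun b => ?_
        obtain ⟨hbC, hlight⟩ := huL b.2
        calc μ (ball b.1.1 (5 * b.1.2) ∩ I) ≤ k * μ (ball b.1.1 (5 * b.1.2)) := hk _ hbC
          _ ≤ k * (c ^ 3 * μ (ball b.1.1 b.1.2)) := by
              gcongr
              exact hd.measure_ball_le_pow_mul (hC _ hbC).1 (hC _ hbC).2
                (by linarith [(hC _ hbC).2])
          _ ≤ k * (c ^ 3 * (2 * μ (ball b.1.1 b.1.2 \ G))) := by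
              gcongr; exact measure_le_two_mul_measure_diff_of_not_le hlight
          _ = 2 * c ^ 3 * k * μ (ball b.1.1 b.1.2 \ G) := by ring
    _ = 2 * c ^ 3 * k * ∑' b : u, μ (ball b.1.1 b.1.2 \ G) := ENNReal.tsum_mul_left

section Transference

variable {A : Type*} {I J : A → Set X} {C : A → Set (X × ℝ)} {k : ℝ≥0∞}

theorem DoublingOn.measure_inter_iUnion_diff_highDensitySet_le [Countable A]
    [OpensMeasurableSpace X] [SFinite μ] (hd : DoublingOn μ S c) (hμ : μ ≠ 0) (hS : μ Sᶜ = 0)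
    (hG : MeasurableSet G) (hJ : ∀ α α', α ≠ α' → J α ∩ J α' ⊆ G) {R : ℝ}
    (hC : ∀ α, ∀ b ∈ C α, b.1 ∈ S ∧ 0 < b.2) (hCR : ∀ α, ∀ b ∈ C α, b.2 ≤ R)
    (hcov : ∀ α, S ∩ I α ⊆ ⋃ b ∈ C α, ball b.1 b.2)
    (hCJ : ∀ α, S ∩ ⋃ b ∈ C α, ball b.1 b.2 ⊆ J α)
    (hk : ∀ α, ∀ b ∈ C α, μ (ball b.1 (5 * b.2) ∩ I α) ≤ k * μ (ball b.1 (5 * b.2))) :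
    μ ((S ∩ ⋃ α, I α) \ highDensitySet μ S (2 * R) (c ^ 2 * 2) G) ≤ 2 * c ^ 3 * k * μ univ := by
  choose u huC hu hdisj hμu using fun α =>
    hd.exists_countable_disjoint_subfamily_measure_diff_highDensitySet_le (G := G) hμ (hC α)
      (hCR α) (hcov α) (hk α)
  -- balls chosen for distinct indices meet only outside `S`, since `J α ∩ J α' ⊆ G`
  have haedisj : Pairwise (AEDisjoint μ on fun p : Σ α, u α => ball p.2.1.1 p.2.1.2 \ G) := by
    rintro ⟨α, b⟩ ⟨α', b'⟩ hne
    refine measure_mono_null ?_ hS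
    rintro y ⟨⟨hyb, hyG⟩, hyb', -⟩ (hyS : y ∈ S)
    refine hyG ?_
    rcases eq_or_ne α α' with rfl | hα
    · have hbb' : b ≠ b' := fun h => hne (h ▸ rfl)
      exact ((hdisj α b.2 b'.2 (Subtype.coe_injective.ne hbb')).le_bot ⟨hyb, hyb'⟩).elim
    · exact hJ α α' hα ⟨hCJ α ⟨hyS, mem_biUnion (huC α b.2) hyb⟩,
        hCJ α' ⟨hyS, mem_biUnion (huC α' b'.2) hyb'⟩⟩
  calc μ ((S ∩ ⋃ α, I α) \ highDensitySet μ S (2 * R) (c ^ 2 * 2) G)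
      ≤ ∑' α, μ ((S ∩ I α) \ highDensitySet μ S (2 * R) (c ^ 2 * 2) G) := by
        rw [inter_iUnion, iUnion_sdiff]; exact measure_iUnion_le _
    _ ≤ ∑' α, 2 * c ^ 3 * k * ∑' b : u α, μ (ball b.1.1 b.1.2 \ G) := ENNReal.tsum_le_tsum hμu
    _ = 2 * c ^ 3 * k * ∑' p : Σ α, u α, μ (ball p.2.1.1 p.2.1.2 \ G) := by
        rw [ENNReal.tsum_mul_left, ENNReal.tsum_sigma']
    _ ≤ 2 * c ^ 3 * k * μ univ := by
        gcongr
        exact (tsum_meas_le_meas_iUnion_of_disjoint₀ μ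
          (fun _ => (measurableSet_ball.diff hG).nullMeasurableSet) haedisj).trans
          (measure_mono (subset_univ _))

theorem DoublingOn.measure_inter_iUnion_diff_diff_highDensitySet_le [Countable A]
    [OpensMeasurableSpace X] [SFinite μ] (hd : DoublingOn μ S c) (hμ : μ ≠ 0) (hS : μ Sᶜ = 0)
    (hSb : Bornology.IsBounded S) (hG : MeasurableSet G) (hJ : ∀ α α', α ≠ α' → J α ∩ J α' ⊆ G)
    (hC : ∀ α, ∀ b ∈ C α, b.1 ∈ S ∧ 0 < b.2) (hcov : ∀ α, S ∩ I α ⊆ ⋃ b ∈ C α, ball b.1 b.2)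
    (hCJ : ∀ α, S ∩ ⋃ b ∈ C α, ball b.1 b.2 ⊆ J α)
    (hk : ∀ α, ∀ b ∈ C α, μ (ball b.1 (5 * b.2) ∩ I α) ≤ k * μ (ball b.1 (5 * b.2))) :
    μ (((S ∩ ⋃ α, I α) \ G) \ highDensitySet μ S (2 * (diam S + 1)) (c ^ 2 * 2) G) ≤
      (2 * c ^ 3 + 1) * μ univ * k := by
  -- Vitali needs bounded radii; a ball wider than `diam S` contains `S`, and then only its own
  -- index contributes
  by_cases hbig : ∃ α, ∃ b ∈ C α, diam S + 1 < b.2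
  · obtain ⟨α, b, hbC, hb⟩ := hbig
    have hSball : S ⊆ ball b.1 b.2 := fun x hx => mem_ball.2 <|
      (dist_le_diam_of_mem hSb hx (hC α b hbC).1).trans_lt (by linarith)
    have hsub : (S ∩ ⋃ α, I α) \ G ⊆ ball b.1 (5 * b.2) ∩ I α := by
      refine subset_inter (fun x hx => ?_) ?_
      · exact ball_subset_ball (by linarith [(hC α b hbC).2]) (hSball hx.1.1)
      · exact inter_iUnion_diff_subset_of_subset hJ
          (fun α => (subset_inter inter_subset_left (hcov α)).trans (hCJ α))
          fun x hx => hCJ α ⟨hx, mem_biUnion hbC (hSball hx)⟩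
    calc _ ≤ μ (ball b.1 (5 * b.2) ∩ I α) := measure_mono (sdiff_subset.trans hsub)
      _ ≤ k * μ univ := (hk α b hbC).trans (by gcongr; exact subset_univ _)
      _ ≤ (2 * c ^ 3 + 1) * μ univ * k := by
        rw [mul_comm k, mul_assoc]; exact le_mul_of_one_le_left' le_add_self
  · push Not at hbig
    calc _ ≤ μ ((S ∩ ⋃ α, I α) \ highDensitySet μ S (2 * (diam S + 1)) (c ^ 2 * 2) G) :=
          measure_mono (sdiff_subset_sdiff_left sdiff_subset)
      _ ≤ 2 * c ^ 3 * k * μ univ :=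
          hd.measure_inter_iUnion_diff_highDensitySet_le hμ hS hG hJ hC hbig hcov hCJ hk
      _ ≤ (2 * c ^ 3 + 1) * μ univ * k := by
          rw [mul_right_comm]; gcongr; exact le_self_add

end Transference

end Doubling

theorem inhomogeneous_transference_principle_general
    {X : Type*} [MetricSpace X] [MeasurableSpace X] [BorelSpace X]
    {A T : Type*} [Countable A] [Countable T]
    (H I : T → A → ℝ → Set X)
    (hHopen : ∀ t α lam, IsOpen (H t α lam))
    (Φ : Set (T → ℝ))
    (μ : Measure X) [IsFiniteMeasure μ]
    (S : Set X) (hSb : Bornology.IsBounded S) (hSfull : μ Sᶜ = 0)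
    (hdoubling : ∃ c : ENNReal, 0 < c ∧ c ≠ ⊤ ∧ ∀ x ∈ S, ∀ r : ℝ, 0 < r →
      μ (Metric.ball x (2 * r)) ≤ c * μ (Metric.ball x r))
    (hinter : ∀ φ ∈ Φ, ∃ φ' ∈ Φ,
      {t : T | ¬ ∀ α α' : A, α ≠ α' →
        I t α (φ t) ∩ I t α' (φ t) ⊆ ⋃ β : A, H t β (φ' t)}.Finite)
    (hcontr : ∀ φ ∈ Φ, ∃ φp ∈ Φ, ∃ k : T → ℝ, (∀ t, 0 < k t) ∧ Summable k ∧
      {t : T | ¬ ∀ α : A, ∃ C : Set (X × ℝ),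
        (∀ b ∈ C, b.1 ∈ S ∧ 0 < b.2) ∧
        (S ∩ I t α (φ t) ⊆ ⋃ b ∈ C, Metric.ball b.1 b.2) ∧
        ((S ∩ ⋃ b ∈ C, Metric.ball b.1 b.2) ⊆ I t α (φp t)) ∧
        (∀ b ∈ C, μ (Metric.ball b.1 (5 * b.2) ∩ I t α (φ t)) ≤
          ENNReal.ofReal (k t) * μ (Metric.ball b.1 (5 * b.2)))}.Finite)
    (hH : ∀ φ ∈ Φ, μ {x : X | {t : T | x ∈ ⋃ α : A, H t α (φ t)}.Infinite} = 0) :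
    ∀ φ ∈ Φ, μ {x : X | {t : T | x ∈ ⋃ α : A, I t α (φ t)}.Infinite} = 0 := by
  intro φ hφ
  rcases eq_or_ne μ 0 with rfl | hμ
  · simp
  obtain ⟨c, -, hc, hd : DoublingOn μ S c⟩ := hdoubling
  obtain ⟨φp, hφp, k, hk, hks, hcontr⟩ := hcontr φ hφ
  obtain ⟨ψ, hψ, hinter⟩ := hinter φp hφp
  set G := fun t => ⋃ β, H t β (ψ t)
  have hG : ∀ t, MeasurableSet (G t) := fun t => .iUnion fun β => (hHopen t β _).measurableSet
  set D := highDensitySet μ S (2 * (diam S + 1)) (c ^ 2 * 2)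
  have hD : μ {x | {t | x ∈ D (G t)}.Infinite} = 0 :=
    measure_setOf_infinite_mem_map_eq_zero highDensitySet_mono (by finiteness)
      (fun _ hG => hd.measure_highDensitySet_le hμ hG _ _) hG (hH ψ hψ)
  have hP : μ {x | {t | x ∈ ((S ∩ ⋃ α, I t α (φ t)) \ G t) \ D (G t)}.Infinite} = 0 := by
    refine measure_setOf_infinite_eq_zero_of_eventually_le
      (a := fun t => (2 * c ^ 3 + 1) * μ univ * ENNReal.ofReal (k t)) ?_ ?_
    · rw [ENNReal.tsum_mul_left, ← ENNReal.ofReal_tsum_of_nonneg (fun t => (hk t).le) hks]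
      finiteness
    · filter_upwards [eventually_cofinite.2 hcontr, eventually_cofinite.2 hinter] with t hC hJ
      choose C hCS hcov hCJ hkC using hC
      exact hd.measure_inter_iUnion_diff_diff_highDensitySet_le hμ hSfull hSb (hG t) hJ hCS hcov
        hCJ hkC
  refine measure_setOf_infinite_eq_zero_of_subset_union (P := fun t => Sᶜ ∪ G t)
    (Q := fun t => D (G t) ∪ ((S ∩ ⋃ α, I t α (φ t)) \ G t) \ D (G t)) (fun t x hx => ?_)
    (measure_setOf_infinite_eq_zero_of_subset_union (fun _ => subset_rfl)
      (measure_mono_null (fun x hx => hx.nonempty.some_mem) hSfull) (hH ψ hψ))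
    (measure_setOf_infinite_eq_zero_of_subset_union (fun _ => subset_rfl) hD hP)
  simp only [mem_union, Set.mem_sdiff, mem_inter_iff, mem_compl_iff]
  tauto

/-- The inhomogeneous transference principle (Beresnevich–Velani, abstract form):
if the triple `(H, I, Φ)` satisfies the intersection property and the measure `μ`
is contracting with respect to `(I, Φ)`, then the vanishing of `μ` on all the
homogeneous limsup sets `Λ_H(φ)` implies its vanishing on all the inhomogeneous
limsup sets `Λ_I(φ)`. -/
theorem inhomogeneous_transference_principle
    {X : Type*} [MetricSpace X] [LocallyCompactSpace X] [MeasurableSpace X] [BorelSpace X]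
    {A T : Type*} [Countable A] [Countable T]
    (H I : T → A → ℝ → Set X)
    (hHopen : ∀ t α lam, IsOpen (H t α lam))
    (hIopen : ∀ t α lam, IsOpen (I t α lam))
    (Φ : Set (T → ℝ)) (hΦpos : ∀ φ ∈ Φ, ∀ t, 0 < φ t)
    (μ : Measure X) [IsFiniteMeasure μ] [NullSingletonClass μ]
    (S : Set X) (hSb : Bornology.IsBounded S) (hSfull : μ Sᶜ = 0)
    (hdoubling : ∃ c : ENNReal, 0 < c ∧ c ≠ ⊤ ∧ ∀ x ∈ S, ∀ r : ℝ, 0 < r →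
      μ (Metric.ball x (2 * r)) ≤ c * μ (Metric.ball x r))
    (hinter : ∀ φ ∈ Φ, ∃ φ' ∈ Φ,
      {t : T | ¬ ∀ α α' : A, α ≠ α' →
        I t α (φ t) ∩ I t α' (φ t) ⊆ ⋃ β : A, H t β (φ' t)}.Finite)
    (hcontr : ∀ φ ∈ Φ, ∃ φp ∈ Φ, ∃ k : T → ℝ, (∀ t, 0 < k t) ∧ Summable k ∧
      {t : T | ¬ ∀ α : A, ∃ C : Set (X × ℝ),
        (∀ b ∈ C, b.1 ∈ S ∧ 0 < b.2) ∧
        (S ∩ I t α (φ t) ⊆ ⋃ b ∈ C, Metric.ball b.1 b.2) ∧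
        ((S ∩ ⋃ b ∈ C, Metric.ball b.1 b.2) ⊆ I t α (φp t)) ∧
        (∀ b ∈ C, μ (Metric.ball b.1 (5 * b.2) ∩ I t α (φ t)) ≤
          ENNReal.ofReal (k t) * μ (Metric.ball b.1 (5 * b.2)))}.Finite)
    (hH : ∀ φ ∈ Φ, μ {x : X | {t : T | x ∈ ⋃ α : A, H t α (φ t)}.Infinite} = 0) :
    ∀ φ ∈ Φ, μ {x : X | {t : T | x ∈ ⋃ α : A, I t α (φ t)}.Infinite} = 0 :=
  inhomogeneous_transference_principle_general H I hHopen Φ μ S hSb hSfull hdoubling hinter hcontr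
    hH
end
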